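/- Let α, β ∈ ℝ with 0 < β < α < b, b ≥ 2 an integer, and α irrational. Then the sequence u_n = ⌊log_b(αn + β)⌋ is not b-regular. -/

import Mathlib

/-!
Write `θₖ = α · fract (bᵏ / α)` (`jumpGap`), so that `α ⌊bᵏ/α⌋ = bᵏ - θₖ`. For `k ≥ 2` and
`0 ≤ γ < α`, the sequence `n ↦ ⌊log_b (α n + γ)⌋` takes at `n = ⌊bᵏ/α⌋` the value `k` if `θₖ ≤ γ`
and `k - 1` if `γ < θₖ`. The kernel sequence `n ↦ u (bⁱ n + j)` is `i + ⌊log_b (α n + γ)⌋` with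
`γ = (α j + β) / bⁱ`, and these offsets become dense in `(0, α)` as `i → ∞`. Since `α` is
irrational the `θₖ` are pairwise distinct, so given `N` of them, each one can be straddled by two
offsets with the same `i` that separate it from the others; the difference of the two kernel
sequences then takes the value `1` at its own point `⌊bᵏ/α⌋` and `0` at the other `N - 1`. The
kernel thus spans a `ℤ`-module with arbitrarily large linearly independent families.
-/

open Real Filter Set Function Topology

theorem Submodule.not_fg_of_forall_exists_linearIndependent {R M : Type*} [Ring R]
    [StrongRankCondition R] [AddCommGroup M] [Module R M] {S : Submodule R M}
    (h : ∀ N : ℕ, ∃ f : Fin N → M, LinearIndependent R f ∧ ∀ t, f t ∈ S) : ¬ S.FG := by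
  intro hS
  have : Module.Finite R S := Module.Finite.iff_fg.mpr hS
  obtain ⟨f, hf, hfS⟩ := h (Module.finrank R S + 1)
  have hf' : LinearIndependent R fun t => (⟨f t, hfS t⟩ : S) :=
    LinearIndependent.of_comp S.subtype hf
  simpa using hf'.fintype_card_le_finrank

theorem linearIndependent_of_apply_eq_ite {ι X R : Type*} [Ring R] [DecidableEq ι]
    {f : ι → X → R} (p : ι → X) (h : ∀ s t, f t (p s) = if s = t then 1 else 0) :
    LinearIndependent R f := by
  refine LinearIndependent.of_comp (LinearMap.funLeft R R p) ?_
  convert Pi.linearIndependent_single_one ι R with t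
  ext s
  simp [LinearMap.funLeft, h, Pi.single_apply]

theorem exists_Ioo_forall_mem_imp_eq {X ι : Type*} [LinearOrder X] [TopologicalSpace X]
    [OrderTopology X] [NoMaxOrder X] [NoMinOrder X] [Finite ι] {f : ι → X} (hf : Injective f)
    (t : ι) : ∃ l r, f t ∈ Ioo l r ∧ ∀ s, f s ∈ Ioo l r → s = t := by
  have hsep : ∀ᶠ x in 𝓝 (f t), ∀ s, s ≠ t → x ≠ f s := by
    refine eventually_all.2 fun s => ?_
    by_cases hs : s = t
    · simp [hs]
    · exact (eventually_ne_nhds (hf.ne (Ne.symm hs))).mono fun _ hx _ => hx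
  obtain ⟨l, r, hlr, hsub⟩ := mem_nhds_iff_exists_Ioo_subset.1 hsep
  exact ⟨l, r, hlr, fun s hs => by_contra fun hst => hsub hs s hst rfl⟩

theorem ite_le_sub_ite_le_eq_ite {X : Type*} [LinearOrder X] {l v r γ₁ γ₂ w : X}
    (h₁ : γ₁ ∈ Ico l v) (h₂ : γ₂ ∈ Ico v r) (hw : w ∈ Ioo l r → w = v) :
    ((if w ≤ γ₂ then 1 else 0) - (if w ≤ γ₁ then 1 else 0) : ℤ) = if w = v then 1 else 0 := by
  obtain ⟨hl₁, h₁v⟩ := h₁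
  obtain ⟨hv₂, h₂r⟩ := h₂
  by_cases hwv : w = v
  · subst hwv
    simp [hv₂, h₁v]
  · rcases le_or_gt w l with hwl | hlw
    · simp [hwv, hwl.trans hl₁, hwl.trans (hl₁.trans (h₁v.le.trans hv₂))]
    · have hrw : r ≤ w := not_lt.1 fun hwr => hwv (hw ⟨hlw, hwr⟩)
      simp [hwv, (h₂r.trans_le hrw).not_ge, ((h₁v.trans_le hv₂).trans (h₂r.trans_le hrw)).not_ge]

section LogFloor

variable {b : ℕ}

theorem floor_logb_eq_of_pow_le_of_lt (hb : 1 < b) {m : ℕ} {x : ℝ} (h₁ : (b : ℝ) ^ m ≤ x)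
    (h₂ : x < (b : ℝ) ^ (m + 1)) : ⌊logb b x⌋ = m := by
  have hb' : (1 : ℝ) < b := by exact_mod_cast hb
  have hx : 0 < x := (pow_pos (by linarith) m).trans_le h₁
  rw [Int.floor_eq_iff]
  constructor
  · calc ((m : ℤ) : ℝ) = logb b ((b : ℝ) ^ m) := by rw [logb_pow, logb_self_eq_one hb']; simp
      _ ≤ logb b x := logb_le_logb_of_le hb' (by positivity) h₁
  · calc logb b x < logb b ((b : ℝ) ^ (m + 1)) := logb_lt_logb hb' hx h₂
      _ = (m : ℤ) + 1 := by rw [logb_pow, logb_self_eq_one hb']; push_cast; ring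

theorem floor_logb_pow_mul (hb : 1 < b) (i : ℕ) {x : ℝ} (hx : 0 < x) :
    ⌊logb b ((b : ℝ) ^ i * x)⌋ = i + ⌊logb b x⌋ := by
  have hb' : (1 : ℝ) < b := by exact_mod_cast hb
  rw [logb_mul (by positivity) hx.ne', logb_pow, logb_self_eq_one hb', mul_one, add_comm,
    Int.floor_add_natCast, add_comm]

theorem natCast_pow_add_le_pow_succ (hb : 2 ≤ b) {m : ℕ} (hm : m ≠ 0) :
    (b : ℝ) ^ m + b ≤ (b : ℝ) ^ (m + 1) := by
  have h : b ^ m + b ≤ b ^ (m + 1) := by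
    have := Nat.le_self_pow hm b
    rw [pow_succ]
    nlinarith
  exact_mod_cast h

end LogFloor

section Jumps

variable {α : ℝ} {b : ℕ}

noncomputable def jumpPoint (α : ℝ) (b k : ℕ) : ℕ := ⌊(b : ℝ) ^ k / α⌋₊

noncomputable def jumpGap (α : ℝ) (b k : ℕ) : ℝ := α * Int.fract ((b : ℝ) ^ k / α)

theorem mul_jumpPoint_add_jumpGap (hα : 0 < α) (k : ℕ) :
    α * jumpPoint α b k + jumpGap α b k = (b : ℝ) ^ k := by
  rw [jumpPoint, jumpGap, Int.fract, ← natCast_floor_eq_intCast_floor (by positivity)]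
  field_simp
  ring

theorem jumpGap_nonneg (hα : 0 < α) (k : ℕ) : 0 ≤ jumpGap α b k :=
  mul_nonneg hα.le (Int.fract_nonneg _)

theorem jumpGap_lt (hα : 0 < α) (k : ℕ) : jumpGap α b k < α :=
  mul_lt_of_lt_one_right hα (Int.fract_lt_one _)

theorem jumpGap_pos (hα : 0 < α) (hirr : Irrational α) (hb : b ≠ 0) (k : ℕ) :
    0 < jumpGap α b k := by
  have hq : Irrational ((b : ℝ) ^ k / α) := by
    simpa using hirr.natCast_div (pow_ne_zero k hb)
  exact mul_pos hα (Int.fract_pos.2 (hq.ne_int _))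

theorem jumpGap_injective (hirr : Irrational α) (hb : 2 ≤ b) : Injective (jumpGap α b) := by
  intro k k' h
  obtain ⟨z, hz⟩ := Int.fract_eq_fract.1 (mul_left_cancel₀ hirr.ne_zero h)
  rw [← sub_div, div_eq_iff hirr.ne_zero] at hz
  rcases eq_or_ne z 0 with rfl | hz0
  · refine Nat.pow_right_injective hb ?_
    exact_mod_cast (sub_eq_zero.1 (by simpa using hz) : (b : ℝ) ^ k = (b : ℝ) ^ k')
  · refine absurd ?_ ((hirr.mul_intCast hz0).ne_int ((b : ℤ) ^ k - (b : ℤ) ^ k'))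
    push_cast
    linarith

theorem floor_logb_mul_jumpPoint_add (hb : 2 ≤ b) (hα : 0 < α) (hαb : α < b) (k : ℕ) {γ : ℝ}
    (hγ₀ : 0 ≤ γ) (hγα : γ < α) :
    ⌊logb b (α * jumpPoint α b (k + 2) + γ)⌋ =
      k + 1 + if jumpGap α b (k + 2) ≤ γ then 1 else 0 := by
  have hP := mul_jumpPoint_add_jumpGap (b := b) hα (k + 2)
  have hθ₀ := jumpGap_nonneg (b := b) hα (k + 2)
  have hθα := jumpGap_lt (b := b) hα (k + 2)
  split_ifs with hθγ
  · have hstep := natCast_pow_add_le_pow_succ hb (m := k + 2) (by omega)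
    rw [floor_logb_eq_of_pow_le_of_lt (m := k + 2) (by omega) (by linarith) (by linarith)]
    push_cast
    ring
  · have hstep := natCast_pow_add_le_pow_succ hb (m := k + 1) (by omega)
    rw [floor_logb_eq_of_pow_le_of_lt (m := k + 1) (by omega) (by linarith) (by linarith)]
    push_cast
    ring

end Jumps

section Kernel

variable {α β : ℝ} {b : ℕ}

theorem floor_logb_mul_pow_mul_add (hb : 1 < b) (hα : 0 ≤ α) (hβ : 0 < β) (i j n : ℕ) :
    ⌊logb b (α * ↑(b ^ i * n + j) + β)⌋ = i + ⌊logb b (α * n + (α * j + β) / b ^ i)⌋ := by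
  have hbi : (0 : ℝ) < (b : ℝ) ^ i := pow_pos (by exact_mod_cast hb.trans' one_pos) i
  rw [← floor_logb_pow_mul hb i (by positivity)]
  congr 2
  push_cast
  field_simp
  ring

theorem eventually_exists_div_pow_mem_Ico (hα : 0 < α) (hβ : 0 ≤ β) (hb : 1 < b) {x y : ℝ}
    (hxy : x < y) (hy : 0 < y) (hyα : y ≤ α) :
    ∀ᶠ i in atTop, ∃ j < b ^ i, (α * j + β) / (b : ℝ) ^ i ∈ Ico x y := by
  have hpow : Tendsto (fun i : ℕ => (b : ℝ) ^ i) atTop atTop :=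
    tendsto_pow_atTop_atTop_of_one_lt (by exact_mod_cast hb)
  filter_upwards [hpow.eventually_gt_atTop (β / y), hpow.eventually_gt_atTop (α / (y - x))]
    with i hβi hαi
  have hbi : (0 : ℝ) < (b : ℝ) ^ i := pow_pos (by exact_mod_cast hb.trans' one_pos) i
  rw [div_lt_iff₀ hy] at hβi
  rw [div_lt_iff₀ (sub_pos.2 hxy)] at hαi
  set j := ⌈(x * (b : ℝ) ^ i - β) / α⌉₊
  have hj_lo : x * (b : ℝ) ^ i ≤ α * j + β := by
    have := (div_le_iff₀' hα).1 (Nat.le_ceil ((x * (b : ℝ) ^ i - β) / α))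
    linarith
  have hj_hi : α * j + β < y * (b : ℝ) ^ i := by
    rcases le_or_gt 0 ((x * (b : ℝ) ^ i - β) / α) with h | h
    · have : α * j < x * (b : ℝ) ^ i - β + α := by
        have := mul_lt_mul_of_pos_left (Nat.ceil_lt_add_one h) hα
        rwa [mul_add, mul_div_cancel₀ _ hα.ne', mul_one] at this
      nlinarith
    · rw [show j = 0 from Nat.ceil_eq_zero.2 h.le]
      simp only [CharP.cast_eq_zero, mul_zero, zero_add]
      linarith
  refine ⟨j, ?_, (le_div_iff₀ hbi).2 hj_lo, (div_lt_iff₀ hbi).2 hj_hi⟩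
  have : α * j < α * (b : ℝ) ^ i := by nlinarith
  exact_mod_cast lt_of_mul_lt_mul_left this hα.le

theorem exists_pow_div_mem_Ico_pair (hα : 0 < α) (hβ : 0 ≤ β) (hb : 1 < b) {x v y : ℝ}
    (hxv : x < v) (hv : 0 < v) (hvy : v < y) (hyα : y ≤ α) :
    ∃ i, ∃ j₁ < b ^ i, ∃ j₂ < b ^ i,
      (α * j₁ + β) / (b : ℝ) ^ i ∈ Ico x v ∧ (α * j₂ + β) / (b : ℝ) ^ i ∈ Ico v y := by
  obtain ⟨i, ⟨j₁, hj₁, h₁⟩, ⟨j₂, hj₂, h₂⟩⟩ :=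
    ((eventually_exists_div_pow_mem_Ico hα hβ hb hxv hv (hvy.le.trans hyα)).and
      (eventually_exists_div_pow_mem_Ico hα hβ hb hvy (hv.trans hvy) hyα)).exists
  exact ⟨i, j₁, hj₁, j₂, hj₂, h₁, h₂⟩

end Kernel

theorem stmt_17 (α β : ℝ) (b : ℕ) (hb : 2 ≤ b) (hirr : Irrational α)
    (hβ : 0 < β) (hβα : β < α) (hαb : α < b)
    (u : ℕ → ℤ) (hu : ∀ n, u n = ⌊Real.logb b (α * n + β)⌋) :
    ¬ (Submodule.span ℤ {g : ℕ → ℤ | ∃ i j : ℕ, j < b ^ i ∧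
      g = fun n => u (b ^ i * n + j)}).FG := by
  have hα : 0 < α := hβ.trans hβα
  refine Submodule.not_fg_of_forall_exists_linearIndependent fun N => ?_
  set θ : Fin N → ℝ := fun t => jumpGap α b (t + 2)
  have hθ : Injective θ :=
    (jumpGap_injective hirr hb).comp fun s t hst => Fin.ext (by simpa using hst)
  choose l r hθlr hsep using exists_Ioo_forall_mem_imp_eq hθ
  choose i j₁ hj₁ j₂ hj₂ hγ₁ hγ₂ using fun t => exists_pow_div_mem_Ico_pair hα hβ.le hb
    (hθlr t).1 (jumpGap_pos hα hirr (by omega) _) (lt_min (hθlr t).2 (jumpGap_lt hα _))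
    (min_le_right _ α)
  refine ⟨fun t n => u (b ^ i t * n + j₂ t) - u (b ^ i t * n + j₁ t),
    linearIndependent_of_apply_eq_ite (fun s => jumpPoint α b (s + 2)) fun s t => ?_,
    fun t => Submodule.sub_mem _ (Submodule.subset_span ⟨i t, j₂ t, hj₂ t, rfl⟩)
      (Submodule.subset_span ⟨i t, j₁ t, hj₁ t, rfl⟩)⟩
  have hγ₁α : (α * j₁ t + β) / (b : ℝ) ^ i t < α := (hγ₁ t).2.trans (jumpGap_lt hα _)
  have hγ₂α : (α * j₂ t + β) / (b : ℝ) ^ i t < α := (hγ₂ t).2.trans_le (min_le_right _ _)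
  have hsign := ite_le_sub_ite_le_eq_ite (hγ₁ t) (Ico_subset_Ico_right (min_le_left _ _) (hγ₂ t))
    (w := θ s) fun hw => congrArg θ (hsep t s hw)
  simp only [hθ.eq_iff, θ] at hsign
  rw [hu, hu, floor_logb_mul_pow_mul_add hb hα.le hβ, floor_logb_mul_pow_mul_add hb hα.le hβ,
    floor_logb_mul_jumpPoint_add hb hα hαb s (by positivity) hγ₂α,
    floor_logb_mul_jumpPoint_add hb hα hαb s (by positivity) hγ₁α]
  linarith
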